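/- arXiv:2010.01459 — 2 statements merged into one kernel-verified Lean document; each statement's English description precedes it below -/
import Mathlib

section
/- In a signed graph, if some partition has zero misclassified edges, then the partition of the vertex set into connected components of the subgraph formed by the '+' edges also has zero misclassified edges. -/
/-!
A partition with no misclassified edge is constant along positive edges, hence constant on the
components of the positive subgraph. A negative edge has its endpoints in different parts of that
partition, so they cannot lie in the same positive component.
-/

namespace SimpleGraph

variable {V β : Type*}

theorem Reachable.apply_eq_of_adj {H : SimpleGraph V} {f : V → β}
    (hf : ∀ u v, H.Adj u v → f u = f v) {u v : V} (h : H.Reachable u v) : f u = f v := by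
  simpa only [Relation.reflTransGen_eq_self] using
    ((reachable_iff_reflTransGen u v).mp h).lift (p := Eq) f hf

theorem Reachable.apply_eq_of_fromRel {r : V → V → Prop} {f : V → β}
    (hf : ∀ u v, r u v → f u = f v) {u v : V} (h : (fromRel r).Reachable u v) : f u = f v :=
  h.apply_eq_of_adj fun a b hab => by
    rcases (fromRel_adj r a b).mp hab with ⟨-, hr | hr⟩
    exacts [hf a b hr, (hf b a hr).symm]

end SimpleGraph

open SimpleGraph in
theorem stmt1_general {V : Type} (G : SimpleGraph V) (sign : V → V → Bool)
    {β : Type} (P : V → β)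
    (hP : ∀ i j, G.Adj i j →
      ((sign i j = true → P i = P j) ∧ (sign i j = false → P i ≠ P j))) :
    ∀ i j, G.Adj i j →
      ((sign i j = true →
        (SimpleGraph.fromRel fun a b => G.Adj a b ∧ sign a b = true).connectedComponentMk i
          = (SimpleGraph.fromRel fun a b => G.Adj a b ∧ sign a b = true).connectedComponentMk j)
       ∧ (sign i j = false →
        (SimpleGraph.fromRel fun a b => G.Adj a b ∧ sign a b = true).connectedComponentMk i
          ≠ (SimpleGraph.fromRel fun a b => G.Adj a b ∧ sign a b = true).connectedComponentMk j)) := by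
  intro i j hij
  refine ⟨fun hs => ConnectedComponent.sound (Adj.reachable ?_), fun hs hcomp => ?_⟩
  · exact (fromRel_adj _ i j).mpr ⟨hij.ne, .inl ⟨hij, hs⟩⟩
  · have hPconst : ∀ a b, G.Adj a b ∧ sign a b = true → P a = P b :=
      fun a b ⟨hab, hs⟩ => (hP a b hab).1 hs
    exact (hP i j hij).2 hs ((ConnectedComponent.exact hcomp).apply_eq_of_fromRel hPconst)

/-- In a signed graph `(G, sign)`, if some partition `P` has zero
misclassified edges, then the partition into connected components of the
positive subgraph also has zero misclassified edges. -/
theorem stmt1 {V : Type} (G : SimpleGraph V) (sign : V → V → Bool)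
    (hsym : ∀ i j, sign i j = sign j i) {β : Type} (P : V → β)
    (hP : ∀ i j, G.Adj i j →
      ((sign i j = true → P i = P j) ∧ (sign i j = false → P i ≠ P j))) :
    ∀ i j, G.Adj i j →
      ((sign i j = true →
        (SimpleGraph.fromRel fun a b => G.Adj a b ∧ sign a b = true).connectedComponentMk i
          = (SimpleGraph.fromRel fun a b => G.Adj a b ∧ sign a b = true).connectedComponentMk j)
       ∧ (sign i j = false →
        (SimpleGraph.fromRel fun a b => G.Adj a b ∧ sign a b = true).connectedComponentMk i
          ≠ (SimpleGraph.fromRel fun a b => G.Adj a b ∧ sign a b = true).connectedComponentMk j)) :=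
  stmt1_general G sign P hP
end

section
/- Let w be nonnegative edge weights on a graph with total weight 1, and suppose a partition of the n vertices into parts P₁, …, P_k has the property that part P_t contains β_t·n vertices and induces edges of total weight at least γ_t, with the induced edge sets pairwise disjoint. Then for any binary HC tree T in which each P_t is exactly the leaf set of some node, value(T) ≤ n·(1 − Σ_t γ_t + Σ_t β_t γ_t). -/
/-- A rooted binary tree whose leaves are labeled by vertices of `V`. -/
inductive HCTree (V : Type) : Type
  | leaf (v : V) : HCTree V
  | node (l r : HCTree V) : HCTree V

namespace HCTree

/-- The list of leaves of a binary tree, from left to right. -/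
def leaves {V : Type} : HCTree V → List V
  | leaf v => [v]
  | node l r => leaves l ++ leaves r

/-- `lcaSize t i j` is `|T_{ij}|`: the number of leaves of the subtree rooted at
the least common ancestor of leaves `i` and `j` in `t`. -/
def lcaSize {V : Type} [DecidableEq V] : HCTree V → V → V → ℕ
  | leaf _, _, _ => 1
  | node l r, i, j =>
    if i ∈ l.leaves ∧ j ∈ l.leaves then lcaSize l i j
    else if i ∈ r.leaves ∧ j ∈ r.leaves then lcaSize r i j
    else (node l r).leaves.length

/-- `Subtree s t`: `s` is (the subtree rooted at) a node of `t`. -/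
inductive Subtree {V : Type} : HCTree V → HCTree V → Prop
  | refl (t : HCTree V) : Subtree t t
  | left {s l r : HCTree V} : Subtree s l → Subtree s (node l r)
  | right {s l r : HCTree V} : Subtree s r → Subtree s (node l r)

end HCTree

/-!
An edge inside a part `P_i` has its least common ancestor inside the node whose leaf set is
`P_i`, so it costs at most `|P_i|`; every other edge costs at most `n`. As the parts induce
disjoint edge sets, each edge receives at most one discount `n - |P_i|`, whence
`value(T) ≤ n - ∑ᵢ (n - |P_i|) · w(E[P_i]) ≤ n - ∑ᵢ (n - |P_i|) · γᵢ`.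
-/

open Finset

theorem sum_mul_le_sub_sum_of_disjoint_blocks {α ι : Type*} [Fintype ι] (E : Finset α)
    (p : ι → α → Prop) [∀ i, DecidablePred (p i)] (w c : α → ℝ) (N : ℝ) (b : ι → ℝ)
    (hw : ∀ e ∈ E, 0 ≤ w e) (hp : ∀ e ∈ E, ∀ i j, p i e → p j e → i = j)
    (hc : ∀ e ∈ E, c e ≤ N) (hcb : ∀ e ∈ E, ∀ i, p i e → c e ≤ b i) :
    ∑ e ∈ E, w e * c e ≤ N * ∑ e ∈ E, w e - ∑ i, (N - b i) * ∑ e ∈ E with p i e, w e := by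
  have hpt : ∀ e ∈ E, c e ≤ N - ∑ i, if p i e then N - b i else 0 := by
    intro e he
    by_cases h : ∃ i, p i e
    · obtain ⟨i, hi⟩ := h
      rw [sum_eq_single i (fun j _ hji => if_neg fun hj => hji (hp e he j i hj hi))
        (by simp), if_pos hi]
      linarith [hcb e he i hi]
    · push Not at h
      simpa [h] using hc e he
  calc ∑ e ∈ E, w e * c e ≤ ∑ e ∈ E, w e * (N - ∑ i, if p i e then N - b i else 0) :=
        sum_le_sum fun e he => mul_le_mul_of_nonneg_left (hpt e he) (hw e he)
    _ = _ := by
      simp only [mul_sub, sum_sub_distrib, mul_sum, sum_filter, mul_ite, mul_zero]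
      rw [sum_comm]
      exact congrArg₂ _ (sum_congr rfl fun _ _ => mul_comm _ _)
        (sum_congr rfl fun _ _ => sum_congr rfl fun _ _ => by split_ifs <;> ring)

namespace HCTree

variable {V : Type}

theorem Subtree.leaves_sublist {s t : HCTree V} (h : Subtree s t) :
    s.leaves.Sublist t.leaves := by
  induction h with
  | refl => exact List.Sublist.refl _
  | left _ ih => exact ih.trans (List.sublist_append_left _ _)
  | right _ ih => exact ih.trans (List.sublist_append_right _ _)

theorem length_leaves_eq_card [Fintype V] {t : HCTree V} (hnodup : t.leaves.Nodup)
    (hall : ∀ v, v ∈ t.leaves) : t.leaves.length = Fintype.card V := by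
  classical
  rw [← List.toFinset_card_of_nodup hnodup,
    eq_univ_of_forall fun v => List.mem_toFinset.mpr (hall v), card_univ]

variable [DecidableEq V]

theorem lcaSize_le_length (t : HCTree V) (i j : V) : t.lcaSize i j ≤ t.leaves.length := by
  induction t with
  | leaf v => simp [lcaSize, leaves]
  | node l r ihl ihr =>
    simp only [lcaSize]
    split_ifs
    · exact ihl.trans (by simp [leaves])
    · exact ihr.trans (by simp [leaves])
    · exact le_rfl

theorem lcaSize_le_length_of_subtree {s t : HCTree V} (h : Subtree s t) (hnodup : t.leaves.Nodup)
    {i j : V} (hi : i ∈ s.leaves) (hj : j ∈ s.leaves) : t.lcaSize i j ≤ s.leaves.length := by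
  induction h with
  | refl => exact lcaSize_le_length _ i j
  | @left l r h ih =>
    have hil := h.leaves_sublist.subset hi
    have hjl := h.leaves_sublist.subset hj
    rw [lcaSize, if_pos ⟨hil, hjl⟩]
    exact ih (List.nodup_append.mp hnodup).1
  | @right l r h ih =>
    have hir := h.leaves_sublist.subset hi
    have hjr := h.leaves_sublist.subset hj
    obtain ⟨-, hr, hlr⟩ := List.nodup_append.mp hnodup
    rw [lcaSize, if_neg fun hl => hlr i hl.1 i hir rfl, if_pos ⟨hir, hjr⟩]
    exact ih hr

end HCTree

open HCTree in
theorem stmt19_general {V : Type} [DecidableEq V] [Fintype V] (w : V → V → ℝ)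
    (hw : ∀ i j, 0 ≤ w i j) (E : Finset (V × V))
    (htotal : ∑ e ∈ E, w e.1 e.2 = 1)
    (k : ℕ) (parts : Fin k → HCTree V) (γ : Fin k → ℝ)
    (t : HCTree V) (hnodup : t.leaves.Nodup) (hall : ∀ v : V, v ∈ t.leaves)
    (hsub : ∀ i, Subtree (parts i) t)
    (hdisj : ∀ i j : Fin k, i ≠ j →
      ∀ v : V, v ∈ (parts i).leaves → v ∉ (parts j).leaves)
    (hind : ∀ i : Fin k,
      γ i ≤ ∑ e ∈ E.filter
        (fun e => e.1 ∈ (parts i).leaves ∧ e.2 ∈ (parts i).leaves), w e.1 e.2) :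
    ∑ e ∈ E, w e.1 e.2 * (t.lcaSize e.1 e.2 : ℝ)
      ≤ (Fintype.card V : ℝ) *
        (1 - ∑ i : Fin k, γ i
          + ∑ i : Fin k,
              (((parts i).leaves.length : ℝ) / (Fintype.card V : ℝ)) * γ i) := by
  set n : ℝ := (Fintype.card V : ℝ)
  have hlen : (t.leaves.length : ℝ) = n := congrArg Nat.cast (length_leaves_eq_card hnodup hall)
  have hn : n ≠ 0 := by
    obtain ⟨e, -⟩ := nonempty_of_sum_ne_zero (htotal ▸ one_ne_zero)
    have : Nonempty V := ⟨e.1⟩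
    exact Nat.cast_ne_zero.mpr Fintype.card_ne_zero
  have hparts : ∀ i, ((parts i).leaves.length : ℝ) ≤ n := fun i =>
    hlen ▸ Nat.cast_le.mpr (hsub i).leaves_sublist.length_le
  have hblocks := sum_mul_le_sub_sum_of_disjoint_blocks E
    (fun i e => e.1 ∈ (parts i).leaves ∧ e.2 ∈ (parts i).leaves) (fun e => w e.1 e.2)
    (fun e => (t.lcaSize e.1 e.2 : ℝ)) n (fun i => ((parts i).leaves.length : ℝ))
    (fun e _ => hw e.1 e.2)
    (fun e _ i j hi hj => by_contra fun hij => hdisj i j hij e.1 hi.1 hj.1)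
    (fun e _ => hlen ▸ Nat.cast_le.mpr (lcaSize_le_length t e.1 e.2))
    (fun e _ i hi => Nat.cast_le.mpr (lcaSize_le_length_of_subtree (hsub i) hnodup hi.1 hi.2))
  calc _ ≤ n * 1 - ∑ i, (n - ((parts i).leaves.length : ℝ)) * ∑ e ∈ E.filter
        (fun e => e.1 ∈ (parts i).leaves ∧ e.2 ∈ (parts i).leaves), w e.1 e.2 := htotal ▸ hblocks
    _ ≤ n - ∑ i, (n - ((parts i).leaves.length : ℝ)) * γ i := by
      rw [mul_one]
      gcongr with i
      · exact sub_nonneg.mpr (hparts i)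
      · exact hind i
    _ = _ := by
      simp only [sub_mul, sum_sub_distrib, ← mul_sum, div_mul_eq_mul_div, ← sum_div]
      field_simp
      ring

open HCTree in
/-- If parts `P₁, …, P_k` of the vertex set, each of fractional
size `β_t` and inducing edges of total weight at least `γ_t ≥ 0`, with pairwise
disjoint leaf sets, are each exactly the leaf set of some node of a binary HC
tree `t`, then `value(t) ≤ n·(1 − Σ_t γ_t + Σ_t β_t γ_t)` (with total edge
weight normalized to 1). -/
theorem stmt19 {V : Type} [DecidableEq V] [Fintype V] (w : V → V → ℝ)
    (hw : ∀ i j, 0 ≤ w i j) (E : Finset (V × V))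
    (htotal : ∑ e ∈ E, w e.1 e.2 = 1)
    (k : ℕ) (parts : Fin k → HCTree V) (γ : Fin k → ℝ) (hγ : ∀ i, 0 ≤ γ i)
    (t : HCTree V) (hnodup : t.leaves.Nodup) (hall : ∀ v : V, v ∈ t.leaves)
    (hsub : ∀ i, Subtree (parts i) t)
    (hdisj : ∀ i j : Fin k, i ≠ j →
      ∀ v : V, v ∈ (parts i).leaves → v ∉ (parts j).leaves)
    (hind : ∀ i : Fin k,
      γ i ≤ ∑ e ∈ E.filter
        (fun e => e.1 ∈ (parts i).leaves ∧ e.2 ∈ (parts i).leaves), w e.1 e.2) :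
    ∑ e ∈ E, w e.1 e.2 * (t.lcaSize e.1 e.2 : ℝ)
      ≤ (Fintype.card V : ℝ) *
        (1 - ∑ i : Fin k, γ i
          + ∑ i : Fin k,
              (((parts i).leaves.length : ℝ) / (Fintype.card V : ℝ)) * γ i) :=
  stmt19_general w hw E htotal k parts γ t hnodup hall hsub hdisj hind
end
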